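/- Let ψ_δ(v) := δ·sign(v)·⌊|v|/δ⌋ − v for δ > 0, and define its Krasovskii regularization Ψ_δ(u) := ⋂_{ε>0} closure(ψ_δ(u + ε·[−1,1])). Then for every u ∈ ℝ and every w ∈ Ψ_δ(u): |w| ≤ δ and w·(w + u) ≤ 0. -/
import Mathlib


/-- Scalar sign function: 1 if `v ≥ 0`, −1 otherwise. -/
noncomputable def sgn (v : ℝ) : ℝ := if 0 ≤ v then 1 else -1

/-- Scalar quantization error `ψ_δ(v) = δ·sign(v)·⌊|v|/δ⌋ − v`. -/
noncomputable def quantErr1 (δ v : ℝ) : ℝ := δ * sgn v * ⌊|v| / δ⌋ - v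

/-- Krasovskii regularization of the quantization error. -/
noncomputable def krasovskii (δ u : ℝ) : Set ℝ :=
  ⋂ ε > (0 : ℝ), closure (quantErr1 δ '' Set.Icc (u - ε) (u + ε))

lemma quantErr1_pointwise (δ v : ℝ) (hδ : 0 < δ) :
    |quantErr1 δ v| ≤ δ ∧ quantErr1 δ v * (quantErr1 δ v + v) ≤ 0 := by
  have hn0 : (0:ℝ) ≤ (⌊|v| / δ⌋ : ℝ) := by
    exact_mod_cast Int.floor_nonneg.mpr (by positivity)
  have h1 : δ * (⌊|v| / δ⌋ : ℝ) ≤ |v| := by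
    have := Int.floor_le (|v| / δ)
    rw [mul_comm]
    exact (le_div_iff₀ hδ).mp this
  have h2 : |v| < δ * ((⌊|v| / δ⌋ : ℝ) + 1) := by
    have := Int.lt_floor_add_one (|v| / δ)
    rw [mul_comm]
    exact (div_lt_iff₀ hδ).mp this
  unfold quantErr1 sgn
  rcases le_or_gt 0 v with hv | hv
  · rw [if_pos hv, abs_le]
    rw [abs_of_nonneg hv] at h1 h2 hn0 ⊢
    constructor
    · constructor <;> nlinarith
    · nlinarith [mul_nonneg hδ.le hn0]
  · rw [if_neg (not_le.mpr hv), abs_le]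
    rw [abs_of_neg hv] at h1 h2 hn0 ⊢
    constructor
    · constructor <;> nlinarith
    · nlinarith [mul_nonneg hδ.le hn0]

theorem krasovskii_sector (δ u : ℝ) (hδ : 0 < δ) :
    ∀ w ∈ krasovskii δ u, |w| ≤ δ ∧ w * (w + u) ≤ 0 := by
  intro w hw
  simp only [krasovskii, Set.mem_iInter] at hw
  have habs : |w| ≤ δ := by
    have h1 := hw 1 one_pos
    have hsub : quantErr1 δ '' Set.Icc (u - 1) (u + 1) ⊆ {x : ℝ | |x| ≤ δ} := by
      rintro x ⟨v, -, rfl⟩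
      exact (quantErr1_pointwise δ v hδ).1
    have hcl : IsClosed {x : ℝ | |x| ≤ δ} :=
      isClosed_le (continuous_abs) continuous_const
    exact closure_minimal hsub hcl h1
  refine ⟨habs, ?_⟩
  have key : ∀ ε : ℝ, 0 < ε → w * (w + u) ≤ δ * ε := by
    intro ε hε
    have h1 := hw ε hε
    have hsub : quantErr1 δ '' Set.Icc (u - ε) (u + ε) ⊆ {x : ℝ | x * (x + u) ≤ δ * ε} := by
      rintro x ⟨v, hv, rfl⟩
      obtain ⟨ha, hb⟩ := quantErr1_pointwise δ v hδ
      have huv : |u - v| ≤ ε := by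
        rw [abs_le]
        constructor <;> [linarith [hv.2]; linarith [hv.1]]
      have : quantErr1 δ v * (u - v) ≤ δ * ε := by
        calc quantErr1 δ v * (u - v) ≤ |quantErr1 δ v * (u - v)| := le_abs_self _
          _ = |quantErr1 δ v| * |u - v| := abs_mul _ _
          _ ≤ δ * ε := mul_le_mul ha huv (abs_nonneg _) (le_of_lt hδ)
      simp only [Set.mem_setOf_eq]
      nlinarith
    have hcl : IsClosed {x : ℝ | x * (x + u) ≤ δ * ε} :=
      isClosed_le (by continuity) continuous_const
    exact closure_minimal hsub hcl h1
  have : ∀ ε' : ℝ, 0 < ε' → w * (w + u) ≤ 0 + ε' := by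
    intro ε' hε'
    have := key (ε' / δ) (by positivity)
    rw [mul_div_cancel₀ _ (ne_of_gt hδ)] at this
    linarith
  exact le_of_forall_pos_le_add this
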